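/- arXiv:1409.4309 — 2 statements merged into one kernel-verified Lean document; each statement's English description precedes it below -/
import Mathlib

section
/- Let X : G → ℝ be a function on an open set G ⊆ ℝ^{n+1}, let Z ⊆ ℝⁿ be closed, and suppose that for every multi-index α with |α| ≤ r, the derivative ∂^α X exists on G ∖ (ℝ × Z) and satisfies |∂^α X(ξ,x)| ≤ A·dist(x,Z)^{r+1−|α|} there, and X = 0 on G ∩ (ℝ × Z). Then all partial derivatives of X of order ≤ r exist and vanish on G ∩ (ℝ × Z), and X is of class C^r on G. -/
/-- The standard basis of `ℝ × ℝⁿ` as directions for partial derivatives in `(ξ, x₁, …, xₙ)`. -/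
noncomputable def basisP (n : ℕ) : Fin (n + 1) → ℝ × (Fin n → ℝ) :=
  Fin.cases (1, 0) (fun i => (0, Pi.single i 1))

/-- Directional (partial) derivative of `h : ℝ × ℝⁿ → ℝ` in the direction `v`. -/
noncomputable def pdP {n : ℕ} (v : ℝ × (Fin n → ℝ))
    (h : ℝ × (Fin n → ℝ) → ℝ) : ℝ × (Fin n → ℝ) → ℝ :=
  fun p => fderiv ℝ h p v

/-- The partial derivative `∂^α` in `(ξ, x₁, …, xₙ)` for a multi-index `α : ℕ₀^{n+1}`. -/
noncomputable def mpdP {n : ℕ} (α : Fin (n + 1) → ℕ)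
    (h : ℝ × (Fin n → ℝ) → ℝ) : ℝ × (Fin n → ℝ) → ℝ :=
  (List.finRange (n + 1)).foldr (fun i k => (pdP (basisP n i))^[α i] k) h

/-!
Induction on `r`, applied to the first partials `∂ᵢX`: these inherit the hypotheses with `r - 1`,
because their iterated partials are iterated partials of `X` with one more derivative. Near a point
`p ∈ ℝ × Z` the estimate `‖X q‖ ≤ A · dist(q, ℝ × Z)^(r+1) ≤ A · ‖q - p‖^(r+1)` makes `X` continuous
at `p` and, for `r ≥ 1`, differentiable at `p` with derivative `0`. So `X` is differentiable on `G`
and its partials are `C^(r-1)` on `G`, i.e. `X` is `C^r`. The bounds are assumed only for the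
canonical order of differentiation in `∂^α`; off `ℝ × Z` the symmetry of second derivatives lets
the induction differentiate in any order.
-/

open Topology Metric Asymptotics

section IteratedDirDeriv

variable {E F : Type*} [NormedAddCommGroup E] [NormedSpace ℝ E]
  [NormedAddCommGroup F] [NormedSpace ℝ F] {U : Set E}

noncomputable def iteratedDirDeriv (f : E → F) (l : List E) : E → F :=
  l.foldr (fun v g x => fderiv ℝ g x v) f

@[simp] lemma iteratedDirDeriv_nil (f : E → F) : iteratedDirDeriv f [] = f := rfl

@[simp] lemma iteratedDirDeriv_cons (f : E → F) (v : E) (l : List E) :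
    iteratedDirDeriv f (v :: l) = fun x => fderiv ℝ (iteratedDirDeriv f l) x v := rfl

lemma iteratedDirDeriv_append (f : E → F) (l₁ l₂ : List E) :
    iteratedDirDeriv f (l₁ ++ l₂) = iteratedDirDeriv (iteratedDirDeriv f l₂) l₁ :=
  List.foldr_append ..

lemma Set.EqOn.iteratedDirDeriv (hU : IsOpen U) {f g : E → F} (h : Set.EqOn f g U)
    (l : List E) : Set.EqOn (iteratedDirDeriv f l) (iteratedDirDeriv g l) U := by
  induction l with
  | nil => exact h
  | cons v l ih =>
    intro x hx
    simp only [iteratedDirDeriv_cons]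
    rw [(ih.eventuallyEq_of_mem (hU.mem_nhds hx)).fderiv_eq]

lemma ContDiffOn.iteratedDirDeriv (hU : IsOpen U) {f : E → F} {m : ℕ} (l : List E)
    (hf : ContDiffOn ℝ (m + l.length : ℕ) f U) :
    ContDiffOn ℝ m (_root_.iteratedDirDeriv f l) U := by
  induction l generalizing m with
  | nil => simpa using hf
  | cons v l ih =>
    have h : ContDiffOn ℝ (m + 1 : ℕ) (_root_.iteratedDirDeriv f l) U :=
      ih (by rwa [List.length_cons, ← add_assoc, add_right_comm] at hf)
    exact (h.fderiv_of_isOpen hU (by simp)).clm_apply contDiffOn_const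

lemma fderiv_fderiv_apply_comm (hU : IsOpen U) {f : E → F} (hf : ContDiffOn ℝ 2 f U)
    (v w : E) :
    Set.EqOn (fun x => fderiv ℝ (fun y => fderiv ℝ f y w) x v)
      (fun x => fderiv ℝ (fun y => fderiv ℝ f y v) x w) U := by
  intro x hx
  have hfx : ContDiffAt ℝ 2 f x := hf.contDiffAt (hU.mem_nhds hx)
  have hdf : DifferentiableAt ℝ (fderiv ℝ f) x :=
    (hfx.fderiv_right (m := 1) (by norm_num)).differentiableAt (by norm_num)
  have hsymm : IsSymmSndFDerivAt ℝ f x := hfx.isSymmSndFDerivAt (by simp)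
  simp only [fderiv_clm_apply hdf (differentiableAt_const _)]
  simpa using hsymm v w

lemma iteratedDirDeriv_perm (hU : IsOpen U) {f : E → F} {l l' : List E} (hl : l.Perm l')
    (hf : ContDiffOn ℝ l.length f U) :
    Set.EqOn (iteratedDirDeriv f l) (iteratedDirDeriv f l') U := by
  induction hl with
  | nil => exact Set.eqOn_refl _ _
  | cons v _ ih =>
    exact Set.EqOn.iteratedDirDeriv hU (ih (hf.of_le (by simp))) [v]
  | swap v w l =>
    have hl : 2 + l.length = (w :: v :: l).length := by simp; omega
    exact fderiv_fderiv_apply_comm hU (ContDiffOn.iteratedDirDeriv hU l (m := 2) (hl ▸ hf)) w v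
  | trans h₁ _ ih₁ ih₂ => exact (ih₁ hf).trans (ih₂ (h₁.length_eq ▸ hf))

end IteratedDirDeriv

section FlatAlongClosedSet

variable {E F : Type*} [NormedAddCommGroup E] [NormedAddCommGroup F]
  {U S : Set E} {f : E → F} {A : ℝ}

lemma isBigO_norm_sub_pow_of_norm_le_infDist_pow {m : ℕ}
    (hbound : ∀ q ∈ U \ S, ‖f q‖ ≤ A * infDist q S ^ (m + 1))
    (hzero : ∀ q ∈ U ∩ S, f q = 0) {p : E} (hU : U ∈ 𝓝 p) (hp : p ∈ S) :
    f =O[𝓝 p] fun q => ‖q - p‖ ^ (m + 1) := by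
  refine IsBigO.of_bound |A| ?_
  filter_upwards [hU] with q hq
  have hq_bound : ‖f q‖ ≤ A * infDist q S ^ (m + 1) := by
    by_cases hqS : q ∈ S
    · simp [hzero q ⟨hq, hqS⟩, infDist_zero_of_mem hqS]
    · exact hbound q ⟨hq, hqS⟩
  calc ‖f q‖ ≤ A * infDist q S ^ (m + 1) := hq_bound
    _ ≤ |A| * infDist q S ^ (m + 1) :=
      mul_le_mul_of_nonneg_right (le_abs_self A) (pow_nonneg infDist_nonneg _)
    _ ≤ |A| * ‖‖q - p‖ ^ (m + 1)‖ := by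
      rw [norm_pow, norm_norm, ← dist_eq_norm]
      gcongr
      exacts [infDist_nonneg, infDist_le_dist_of_mem hp]

variable [NormedSpace ℝ E] [NormedSpace ℝ F]

lemma contDiffOn_succ_of_contDiffOn_fderiv_apply [FiniteDimensional ℝ E] {ι : Type*}
    {v : ι → E} (hv : Submodule.span ℝ (Set.range v) = ⊤) (hU : IsOpen U) {k : ℕ}
    (hf : DifferentiableOn ℝ f U) (h : ∀ i, ContDiffOn ℝ k (fun x => fderiv ℝ f x (v i)) U) :
    ContDiffOn ℝ (k + 1 : ℕ) f U := by
  rw [Nat.cast_succ, contDiffOn_succ_iff_fderiv_of_isOpen hU]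
  refine ⟨hf, by simp, contDiffOn_clm_apply.mpr fun y => ?_⟩
  have hy : y ∈ Submodule.span ℝ (Set.range v) := hv ▸ Submodule.mem_top
  induction hy using Submodule.span_induction with
  | mem y hy => obtain ⟨i, rfl⟩ := hy; exact h i
  | zero => simpa using contDiffOn_const
  | add y z _ _ hy hz => simpa using hy.add hz
  | smul c y _ hy => simpa using hy.const_smul c

theorem iteratedDirDeriv_eq_zero_and_contDiffOn [FiniteDimensional ℝ E] {ι : Type*}
    {v : ι → E} (hv : Submodule.span ℝ (Set.range v) = ⊤) (hU : IsOpen U) (hS : IsClosed S)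
    (r : ℕ) (hf : ContDiffOn ℝ r f (U \ S))
    (hbound : ∀ l : List ι, l.length ≤ r → ∀ p ∈ U \ S,
      ‖iteratedDirDeriv f (l.map v) p‖ ≤ A * infDist p S ^ (r + 1 - l.length))
    (hzero : ∀ p ∈ U ∩ S, f p = 0) :
    (∀ l : List ι, l.length ≤ r → ∀ p ∈ U ∩ S, iteratedDirDeriv f (l.map v) p = 0) ∧
      ContDiffOn ℝ r f U := by
  have hUS : IsOpen (U \ S) := hU.sdiff hS
  have hbound₀ : ∀ q ∈ U \ S, ‖f q‖ ≤ A * infDist q S ^ (r + 1) := by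
    simpa using hbound [] (by simp)
  induction r generalizing f with
  | zero =>
    refine ⟨fun l hl p hp => by simp [List.length_eq_zero_iff.mp (Nat.le_zero.mp hl), hzero p hp],
      ?_⟩
    rw [Nat.cast_zero, contDiffOn_zero]
    intro p hp
    by_cases hpS : p ∈ S
    · have hO := isBigO_norm_sub_pow_of_norm_le_infDist_pow hbound₀ hzero (hU.mem_nhds hp) hpS
      have hcont : ContinuousAt f p := by
        rw [ContinuousAt, hzero p ⟨hp, hpS⟩]
        exact hO.trans_tendsto (by simpa using tendsto_norm_sub_self p)
      exact hcont.continuousWithinAt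
    · exact (hf.continuousOn.continuousAt (hUS.mem_nhds ⟨hp, hpS⟩)).continuousWithinAt
  | succ k ih =>
    have hderiv : ∀ p ∈ U ∩ S, HasFDerivAt f (0 : E →L[ℝ] F) p := fun p hp =>
      (isBigO_norm_sub_pow_of_norm_le_infDist_pow hbound₀ hzero (hU.mem_nhds hp.1)
        hp.2).hasFDerivAt (by omega)
    have hpartial : ∀ i, _ ∧ ContDiffOn ℝ k (iteratedDirDeriv f [v i]) U := fun i => by
      refine ih (ContDiffOn.iteratedDirDeriv hUS [v i] hf) (fun l hl p hp => ?_)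
        (fun p hp => by simp [(hderiv p hp).fderiv]) ?_
      · have h := hbound (l ++ [i]) (by simpa) p hp
        rwa [List.map_append, List.map_singleton, iteratedDirDeriv_append, List.length_append,
          List.length_singleton, Nat.add_sub_add_right] at h
      · simpa using hbound [i] (by simp)
    refine ⟨fun l hl p hp => ?_, ?_⟩
    · rcases l.eq_nil_or_concat with rfl | ⟨l, i, rfl⟩
      · exact hzero p hp
      · simpa [iteratedDirDeriv_append] using (hpartial i).1 l (by simpa using hl) p hp
    · refine contDiffOn_succ_of_contDiffOn_fderiv_apply hv hU (fun p hp => ?_)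
        fun i => (hpartial i).2
      by_cases hpS : p ∈ S
      · exact (hderiv p ⟨hp, hpS⟩).differentiableAt.differentiableWithinAt
      · exact ((hf.differentiableOn (by simp)).differentiableAt
          (hUS.mem_nhds ⟨hp, hpS⟩)).differentiableWithinAt

end FlatAlongClosedSet

section Coordinates

lemma infDist_univ_prod {α β : Type*} [PseudoMetricSpace α] [PseudoMetricSpace β]
    (p : α × β) (Z : Set β) : infDist p (Set.univ ×ˢ Z) = infDist p.2 Z := by
  rcases Z.eq_empty_or_nonempty with rfl | hZ
  · simp
  have : Nonempty α := ⟨p.1⟩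
  refine le_antisymm ((le_infDist hZ).2 fun z hz => ?_)
    ((le_infDist (Set.univ_nonempty.prod hZ)).2 ?_)
  · calc infDist p (Set.univ ×ˢ Z) ≤ dist p (p.1, z) := infDist_le_dist_of_mem ⟨trivial, hz⟩
      _ = dist p.2 z := by simp [Prod.dist_eq]
  · rintro ⟨t, z⟩ ⟨-, hz⟩
    exact (infDist_le_dist_of_mem hz).trans (le_max_right _ _)

lemma span_range_basisP (n : ℕ) : Submodule.span ℝ (Set.range (basisP n)) = ⊤ := by
  refine Submodule.eq_top_iff'.2 fun w => ?_
  have hw : w = w.1 • basisP n 0 + ∑ j, w.2 j • basisP n j.succ := by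
    ext <;> simp [basisP, Prod.fst_sum, Prod.snd_sum, Pi.single_apply]
  rw [hw]
  exact add_mem (Submodule.smul_mem _ _ (Submodule.subset_span ⟨0, rfl⟩))
    (Submodule.sum_mem _ fun j _ => Submodule.smul_mem _ _ (Submodule.subset_span ⟨_, rfl⟩))

variable {m : ℕ}

def multiIndexList (α : Fin m → ℕ) : List (Fin m) :=
  (List.finRange m).flatMap fun i => List.replicate (α i) i

lemma count_multiIndexList (α : Fin m → ℕ) (j : Fin m) : (multiIndexList α).count j = α j := by
  simp [multiIndexList, List.count_flatMap, List.count_replicate, ← Fin.sum_univ_def]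

lemma length_multiIndexList (α : Fin m → ℕ) : (multiIndexList α).length = ∑ i, α i := by
  simp [multiIndexList, List.length_flatMap, ← Fin.sum_univ_def]

lemma sum_count_eq_length (l : List (Fin m)) : ∑ j, l.count j = l.length := by
  simpa using Multiset.sum_count_eq_card (s := Finset.univ) (m := (l : Multiset (Fin m)))
    (fun a _ => Finset.mem_univ a)

lemma multiIndexList_count_perm (l : List (Fin m)) :
    (multiIndexList fun j => l.count j).Perm l :=
  List.perm_iff_count.2 (count_multiIndexList _)

end Coordinates

section PartialDerivatives

variable {n : ℕ}

lemma iterate_pdP (v : ℝ × (Fin n → ℝ)) (k : ℕ) (h : ℝ × (Fin n → ℝ) → ℝ) :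
    (pdP v)^[k] h = iteratedDirDeriv h (List.replicate k v) := by
  induction k with
  | zero => rfl
  | succ k ih => rw [Function.iterate_succ_apply', ih]; rfl

lemma mpdP_eq_iteratedDirDeriv (α : Fin (n + 1) → ℕ) (h : ℝ × (Fin n → ℝ) → ℝ) :
    mpdP α h = iteratedDirDeriv h ((multiIndexList α).map (basisP n)) := by
  unfold mpdP multiIndexList
  induction List.finRange (n + 1) with
  | nil => rfl
  | cons i l ih =>
    rw [List.flatMap_cons, List.map_append, iteratedDirDeriv_append, ← ih, List.map_replicate]
    exact iterate_pdP _ _ _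

lemma iteratedDirDeriv_map_basisP_eqOn_mpdP {U : Set (ℝ × (Fin n → ℝ))} (hU : IsOpen U)
    {h : ℝ × (Fin n → ℝ) → ℝ} {l : List (Fin (n + 1))} (hh : ContDiffOn ℝ l.length h U) :
    Set.EqOn (iteratedDirDeriv h (l.map (basisP n))) (mpdP (fun j => l.count j) h) U := by
  rw [mpdP_eq_iteratedDirDeriv]
  exact iteratedDirDeriv_perm hU ((multiIndexList_count_perm l).map _).symm (by simpa using hh)

end PartialDerivatives

theorem stmt10_general {n : ℕ} (r : ℕ) (G : Set (ℝ × (Fin n → ℝ))) (hG : IsOpen G)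
    (Z : Set (Fin n → ℝ)) (hZ : IsClosed Z) (X : ℝ × (Fin n → ℝ) → ℝ)
    (A : ℝ)
    (hsmooth : ContDiffOn ℝ r X (G \ (Set.univ ×ˢ Z)))
    (hbound : ∀ α : Fin (n + 1) → ℕ, (∑ i, α i) ≤ r → ∀ p ∈ G \ (Set.univ ×ˢ Z),
      |mpdP α X p| ≤ A * Metric.infDist p.2 Z ^ (r + 1 - ∑ i, α i))
    (hzero : ∀ p ∈ G ∩ (Set.univ ×ˢ Z), X p = 0) :
    (∀ α : Fin (n + 1) → ℕ, (∑ i, α i) ≤ r →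
      ∀ p ∈ G ∩ (Set.univ ×ˢ Z), mpdP α X p = 0) ∧
    ContDiffOn ℝ r X G := by
  have hS : IsClosed (Set.univ ×ˢ Z : Set (ℝ × (Fin n → ℝ))) := isClosed_univ.prod hZ
  have hlist : ∀ l : List (Fin (n + 1)), l.length ≤ r → ∀ p ∈ G \ (Set.univ ×ˢ Z),
      ‖iteratedDirDeriv X (l.map (basisP n)) p‖ ≤
        A * infDist p (Set.univ ×ˢ Z) ^ (r + 1 - l.length) := by
    intro l hl p hp
    rw [iteratedDirDeriv_map_basisP_eqOn_mpdP (hG.sdiff hS) (hsmooth.of_le (by exact_mod_cast hl))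
      hp, Real.norm_eq_abs, infDist_univ_prod, ← sum_count_eq_length]
    exact hbound _ (by rwa [sum_count_eq_length]) p hp
  obtain ⟨hvanish, hcont⟩ :=
    iteratedDirDeriv_eq_zero_and_contDiffOn (span_range_basisP n) hG hS r hsmooth hlist hzero
  refine ⟨fun α hα p hp => ?_, hcont⟩
  rw [mpdP_eq_iteratedDirDeriv]
  exact hvanish _ (by rwa [length_multiIndexList]) p hp

/-- if `X` is `C^r` off `ℝ × Z`, its partials of order `≤ r` satisfy
`|∂^α X(ξ,x)| ≤ A·dist(x,Z)^{r+1-|α|}` there, and `X = 0` on `G ∩ (ℝ × Z)`, then all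
partials of order `≤ r` vanish on `G ∩ (ℝ × Z)` and `X` is of class `C^r` on `G`. -/
theorem stmt10 {n : ℕ} (r : ℕ) (hr : 1 ≤ r) (G : Set (ℝ × (Fin n → ℝ))) (hG : IsOpen G)
    (Z : Set (Fin n → ℝ)) (hZ : IsClosed Z) (X : ℝ × (Fin n → ℝ) → ℝ)
    (A : ℝ) (hA : 0 < A)
    (hsmooth : ContDiffOn ℝ r X (G \ (Set.univ ×ˢ Z)))
    (hbound : ∀ α : Fin (n + 1) → ℕ, (∑ i, α i) ≤ r → ∀ p ∈ G \ (Set.univ ×ˢ Z),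
      |mpdP α X p| ≤ A * Metric.infDist p.2 Z ^ (r + 1 - ∑ i, α i))
    (hzero : ∀ p ∈ G ∩ (Set.univ ×ˢ Z), X p = 0) :
    (∀ α : Fin (n + 1) → ℕ, (∑ i, α i) ≤ r →
      ∀ p ∈ G ∩ (Set.univ ×ˢ Z), mpdP α X p = 0) ∧
    ContDiffOn ℝ r X G :=
  stmt10_general r G hG Z hZ X A hsmooth hbound hzero
end

section
/- Let f : ℝⁿ → ℝ be analytic near 0 with f(0)=0, ∇f(0)=0, satisfying the Łojasiewicz inequality |∇f(x)| ≥ C|f(x)| on a neighborhood U of 0, and let u = g − f ∈ (f)^{r+2} with r ≥ 1. Then, after shrinking U, there is a constant C₂ > 0 such that |∇u(x)| ≤ C₂|∇f(x)|^{r+1} ≤ C₂|∇f(x)|² for x ∈ U (where the second inequality holds after further shrinking so that |∇f| ≤ 1). -/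
open Topology Filter


lemma grad_norm_eq {n : ℕ} (f : EuclideanSpace ℝ (Fin n) → ℝ) (x : EuclideanSpace ℝ (Fin n)) :
    ‖gradient f x‖ = ‖fderiv ℝ f x‖ := by
  rw [gradient]
  exact (InnerProductSpace.toDual ℝ _).symm.norm_map _

/-- with `f` analytic, `f(0)=0`, `∇f(0)=0`, the Łojasiewicz inequality
`‖∇f‖ ≥ C|f|` on `U`, and `u = g − f ∈ (f)^{r+2}` with `r ≥ 1`, after shrinking `U`
there is `C₂ > 0` with `‖∇u(x)‖ ≤ C₂‖∇f(x)‖^{r+1} ≤ C₂‖∇f(x)‖²` on the smaller set. -/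
theorem stmt16 {n : ℕ} (f g : EuclideanSpace ℝ (Fin n) → ℝ) (r : ℕ) (hr : 1 ≤ r)
    (hf : AnalyticAt ℝ f 0) (hg : AnalyticAt ℝ g 0) (hf0 : f 0 = 0)
    (hgrad : gradient f 0 = 0)
    (U : Set (EuclideanSpace ℝ (Fin n))) (hU : U ∈ nhds (0 : EuclideanSpace ℝ (Fin n)))
    (C : ℝ) (hC : 0 < C) (hLoj : ∀ x ∈ U, C * |f x| ≤ ‖gradient f x‖)
    (hmem : ∃ h : EuclideanSpace ℝ (Fin n) → ℝ, AnalyticAt ℝ h 0 ∧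
      ∀ᶠ x in nhds 0, g x - f x = h x * f x ^ (r + 2)) :
    ∃ U' ∈ nhds (0 : EuclideanSpace ℝ (Fin n)), U' ⊆ U ∧ ∃ C₂ > (0 : ℝ), ∀ x ∈ U',
      ‖gradient (fun y => g y - f y) x‖ ≤ C₂ * ‖gradient f x‖ ^ (r + 1) ∧
      C₂ * ‖gradient f x‖ ^ (r + 1) ≤ C₂ * ‖gradient f x‖ ^ 2 := by
  obtain ⟨h, hh, hev⟩ := hmem
  have hDf0 : fderiv ℝ f 0 = 0 := by
    have : (InnerProductSpace.toDual ℝ _) (gradient f 0) = fderiv ℝ f 0 := by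
      rw [gradient]; simp
    rw [hgrad] at this
    simpa using this.symm
  set M₀ : ℝ := |h 0| + 1 with hM₀def
  set M₁ : ℝ := ‖fderiv ℝ h 0‖ + 1 with hM₁def
  -- eventual conditions
  have e1 : ∀ᶠ x in 𝓝 0, ‖fderiv ℝ f x‖ ≤ 1 := by
    have hc : ContinuousAt (fun x => ‖fderiv ℝ f x‖) 0 := hf.fderiv.continuousAt.norm
    exact hc.eventually_le_const (by simp [hDf0])
  have e2 : ∀ᶠ x in 𝓝 0, |h x| ≤ M₀ := by
    have hc : ContinuousAt (fun x => |h x|) 0 := hh.continuousAt.abs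
    have := hc.eventually_le_const (by simp [hM₀def] : |h 0| < M₀)
    exact this
  have e3 : ∀ᶠ x in 𝓝 0, ‖fderiv ℝ h x‖ ≤ M₁ := by
    have hc : ContinuousAt (fun x => ‖fderiv ℝ h x‖) 0 := hh.fderiv.continuousAt.norm
    exact hc.eventually_le_const (by simp [hM₁def])
  have e4 : ∀ᶠ x in 𝓝 0, AnalyticAt ℝ f x := hf.eventually_analyticAt
  have e5 : ∀ᶠ x in 𝓝 0, AnalyticAt ℝ h x := hh.eventually_analyticAt
  have e6 : ∀ᶠ x in 𝓝 0, ∀ᶠ y in 𝓝 x, g y - f y = h y * f y ^ (r + 2) :=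
    hev.eventually_nhds
  have e7 : ∀ᶠ x in 𝓝 0, x ∈ U := hU
  have E := (((((e1.and e2).and e3).and e4).and e5).and e6).and e7
  refine ⟨_, E, fun x hx => hx.2, ?_⟩
  set A : ℝ := C⁻¹ with hAdef
  have hA : 0 < A := inv_pos.mpr hC
  have hM₀pos : (0:ℝ) < M₀ := by positivity
  have hM₁pos : (0:ℝ) < M₁ := by positivity
  refine ⟨A ^ (r+2) * M₁ + (r+2) * M₀ * A ^ (r+1) + 1, by positivity, ?_⟩
  rintro x ⟨⟨⟨⟨⟨⟨h1, h2⟩, h3⟩, h4⟩, h5⟩, h6⟩, h7⟩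
  set G : ℝ := ‖gradient f x‖ with hGdef
  have hG0 : 0 ≤ G := norm_nonneg _
  have hGf : G = ‖fderiv ℝ f x‖ := grad_norm_eq f x
  have hG1 : G ≤ 1 := hGf ▸ h1
  have hfx : |f x| ≤ A * G := by
    have := hLoj x h7
    rw [← hGdef] at this
    rw [hAdef]
    rw [inv_mul_eq_div, le_div_iff₀ hC]
    linarith [this]
  -- derivative computation
  have hfd : HasFDerivAt f (fderiv ℝ f x) x := h4.differentiableAt.hasFDerivAt
  have hhd : HasFDerivAt h (fderiv ℝ h x) x := h5.differentiableAt.hasFDerivAt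
  have hpow : HasFDerivAt (fun y => f y ^ (r + 2))
      ((((r + 2 : ℕ) : ℝ) * f x ^ (r + 1)) • fderiv ℝ f x) x := by
    have hd : HasDerivAt (fun t : ℝ => t ^ (r + 2))
        (((r + 2 : ℕ) : ℝ) * f x ^ (r + 1)) (f x) := by
      simpa using hasDerivAt_pow (r + 2) (f x)
    exact hd.comp_hasFDerivAt x hfd
  have hmul : HasFDerivAt (fun y => h y * f y ^ (r + 2))
      (h x • ((((r + 2 : ℕ) : ℝ) * f x ^ (r + 1)) • fderiv ℝ f x)
        + f x ^ (r + 2) • fderiv ℝ h x) x := hhd.mul hpow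
  have hkey : fderiv ℝ (fun y => g y - f y) x
      = h x • ((((r + 2 : ℕ) : ℝ) * f x ^ (r + 1)) • fderiv ℝ f x)
        + f x ^ (r + 2) • fderiv ℝ h x := by
    rw [Filter.EventuallyEq.fderiv_eq h6]
    exact hmul.fderiv
  have hnorm : ‖gradient (fun y => g y - f y) x‖
      ≤ |h x| * (((r + 2 : ℕ) : ℝ) * |f x| ^ (r + 1)) * ‖fderiv ℝ f x‖
        + |f x| ^ (r + 2) * ‖fderiv ℝ h x‖ := by
    rw [grad_norm_eq, hkey]
    refine le_trans (norm_add_le _ _) ?_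
    gcongr
    · rw [norm_smul, norm_smul, Real.norm_eq_abs, Real.norm_eq_abs, abs_mul, abs_pow]
      rw [Nat.abs_cast]
      ring_nf
      apply le_of_eq; ring
    · rw [norm_smul, Real.norm_eq_abs, abs_pow]
  -- final estimates
  have hfpow1 : |f x| ^ (r + 1) ≤ (A * G) ^ (r + 1) :=
    pow_le_pow_left₀ (abs_nonneg _) hfx _
  have hfpow2 : |f x| ^ (r + 2) ≤ (A * G) ^ (r + 2) :=
    pow_le_pow_left₀ (abs_nonneg _) hfx _
  have hGp : G ^ (r + 2) ≤ G ^ (r + 1) :=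
    pow_le_pow_of_le_one hG0 hG1 (by omega)
  constructor
  · refine hnorm.trans ?_
    rw [← hGf]
    have t1 : |h x| * (((r + 2 : ℕ) : ℝ) * |f x| ^ (r + 1)) * G
        ≤ (r + 2) * M₀ * A ^ (r + 1) * G ^ (r + 1) := by
      have : |h x| * (((r + 2 : ℕ) : ℝ) * |f x| ^ (r + 1)) * G
          ≤ M₀ * (((r + 2 : ℕ) : ℝ) * (A * G) ^ (r + 1)) * 1 := by
        have h1' : |f x| ^ (r+1) ≤ (A*G)^(r+1) := hfpow1
        have : (0:ℝ) ≤ (A*G)^(r+1) := by positivity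
        gcongr
      refine this.trans (le_of_eq ?_)
      rw [mul_pow]
      push_cast
      ring
    have t2 : |f x| ^ (r + 2) * ‖fderiv ℝ h x‖ ≤ A ^ (r + 2) * M₁ * G ^ (r + 1) := by
      have : |f x| ^ (r + 2) * ‖fderiv ℝ h x‖ ≤ (A * G) ^ (r + 2) * M₁ := by
        gcongr
      refine this.trans ?_
      rw [mul_pow]
      calc A ^ (r+2) * G ^ (r+2) * M₁ ≤ A ^ (r+2) * G ^ (r+1) * M₁ := by gcongr
        _ = A ^ (r+2) * M₁ * G ^ (r+1) := by ring
    have hGp1 : (0:ℝ) ≤ G ^ (r+1) := by positivity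
    calc |h x| * (((r + 2 : ℕ) : ℝ) * |f x| ^ (r + 1)) * G + |f x| ^ (r + 2) * ‖fderiv ℝ h x‖
        ≤ (r+2) * M₀ * A ^ (r+1) * G ^ (r+1) + A ^ (r+2) * M₁ * G ^ (r+1) := add_le_add t1 t2
      _ = ((r+2) * M₀ * A ^ (r+1) + A ^ (r+2) * M₁) * G ^ (r+1) := by ring
      _ ≤ (A ^ (r+2) * M₁ + (r+2) * M₀ * A ^ (r+1) + 1) * G ^ (r+1) :=
          mul_le_mul_of_nonneg_right (by linarith) hGp1
  · have : G ^ (r + 1) ≤ G ^ 2 := pow_le_pow_of_le_one hG0 hG1 (by omega)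
    have hC₂ : (0:ℝ) ≤ A ^ (r+2) * M₁ + (r+2) * M₀ * A ^ (r+1) + 1 := by positivity
    exact mul_le_mul_of_nonneg_left this hC₂
end
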